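/- arXiv:2006.12319 — 4 statements merged into one kernel-verified Lean document; each statement's English description precedes it below -/
import Mathlib

section
/- Let p be a prime and let a be a natural number not divisible by p. Then there exist natural numbers x and y with 1 ≤ x ≤ ⌈√p⌉ and 1 ≤ y ≤ ⌈√p⌉ such that a·x ≡ y (mod p) or a·x ≡ -y (mod p). -/
/-- Thue's Lemma: for a prime `p` and `a` not divisible by `p`, there exist
`x, y` with `1 ≤ x, y ≤ ⌈√p⌉` such that `a·x ≡ ±y (mod p)`. -/
theorem thue_lemma (p : ℕ) (hp : p.Prime) (a : ℕ) (ha : ¬ p ∣ a) :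
    ∃ x y : ℕ, 1 ≤ x ∧ x ≤ ⌈Real.sqrt p⌉₊ ∧ 1 ≤ y ∧ y ≤ ⌈Real.sqrt p⌉₊ ∧
      ((a * x : ℤ) ≡ (y : ℤ) [ZMOD p] ∨ (a * x : ℤ) ≡ -(y : ℤ) [ZMOD p]) := by
  have hp2 := hp.two_le
  set m := ⌈Real.sqrt p⌉₊ with hmdef
  have hm1 : 1 ≤ m := Nat.one_le_ceil_iff.mpr (Real.sqrt_pos.mpr (by positivity))
  -- p = 2 case
  rcases eq_or_lt_of_le hp2 with h2 | hp3
  · subst h2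
    refine ⟨1, 1, le_refl 1, hm1, le_refl 1, hm1, Or.inl ?_⟩
    have hodd : a % 2 = 1 := by
      rcases Nat.mod_two_eq_zero_or_one a with h | h
      · exact absurd (Nat.dvd_of_mod_eq_zero h) ha
      · exact h
    have h1 : (a : ℤ) % 2 = 1 := by omega
    show (a * 1 : ℤ) % 2 = (1 : ℤ) % 2
    omega
  -- p ≥ 3
  have hmlt : m < p := by
    have h1 : Real.sqrt p ≤ ((p - 1 : ℕ) : ℝ) := by
      have hle : (p : ℝ) ≤ ((p - 1 : ℕ) : ℝ) ^ 2 := by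
        have h3 : p ≤ (p - 1) ^ 2 := by
          have h4 : 1 ≤ p := by omega
          zify [h4]
          nlinarith [hp3]
        exact_mod_cast h3
      calc Real.sqrt p ≤ Real.sqrt (((p - 1 : ℕ) : ℝ) ^ 2) := Real.sqrt_le_sqrt hle
        _ = ((p - 1 : ℕ) : ℝ) := Real.sqrt_sq (by positivity)
    have := Nat.ceil_le.mpr h1
    omega
  have hmsq : p ≤ m ^ 2 := by
    have h1 : (p : ℝ) ≤ (m : ℝ) ^ 2 := by
      have h2 : Real.sqrt p ≤ (m : ℝ) := Nat.le_ceil _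
      nlinarith [Real.sq_sqrt (show (0:ℝ) ≤ p by positivity), Real.sqrt_nonneg (p : ℝ)]
    exact_mod_cast h1
  haveI : NeZero p := ⟨hp.pos.ne'⟩
  obtain ⟨⟨x1, y1⟩, ⟨x2, y2⟩, hne, heq⟩ :=
    Fintype.exists_ne_map_eq_of_card_lt
      (fun q : Fin (m + 1) × Fin (m + 1) => ((a : ZMod p) * (q.1 : ℕ) - (q.2 : ℕ)))
      (by
        simp only [Fintype.card_prod, Fintype.card_fin, ZMod.card]
        nlinarith)
  simp only at heq
  set X : ℤ := (x1 : ℕ) - (x2 : ℕ) with hXdef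
  set Y : ℤ := (y1 : ℕ) - (y2 : ℕ) with hYdef
  have hmod : (a * X : ℤ) ≡ Y [ZMOD p] := by
    rw [← ZMod.intCast_eq_intCast_iff, hXdef, hYdef]
    push_cast
    linear_combination heq
  have hXb : X.natAbs ≤ m := by
    have h1 := x1.is_le
    have h2 := x2.is_le
    omega
  have hYb : Y.natAbs ≤ m := by
    have h1 := y1.is_le
    have h2 := y2.is_le
    omega
  have hX0 : X ≠ 0 := by
    intro h
    have hdvd : (p : ℤ) ∣ Y := by
      have h1 : (p : ℤ) ∣ Y - a * X := hmod.dvd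
      rw [h] at h1
      simpa using h1
    have hYz : Y = 0 := by
      have h1 : p ∣ Y.natAbs := by simpa using Int.natAbs_dvd_natAbs.mpr hdvd
      have h2 : Y.natAbs = 0 := Nat.eq_zero_of_dvd_of_lt h1 (lt_of_le_of_lt hYb hmlt)
      omega
    have hx : x1 = x2 := Fin.ext (by omega)
    have hy : y1 = y2 := Fin.ext (by omega)
    exact hne (by rw [hx, hy])
  have hY0 : Y ≠ 0 := by
    intro h
    have hdvd : (p : ℤ) ∣ (a : ℤ) * X := by
      have h1 : (p : ℤ) ∣ Y - a * X := hmod.dvd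
      rw [h] at h1
      simpa [zero_sub, dvd_neg] using h1
    have hdX : (p : ℤ) ∣ X := by
      rcases (Int.Prime.dvd_mul' hp hdvd) with h' | h'
      · exact absurd (Int.ofNat_dvd.mp h') ha
      · exact h'
    have h1 : p ∣ X.natAbs := by simpa using Int.natAbs_dvd_natAbs.mpr hdX
    have h2 : X.natAbs = 0 := Nat.eq_zero_of_dvd_of_lt h1 (lt_of_le_of_lt hXb hmlt)
    exact hX0 (by omega)
  refine ⟨X.natAbs, Y.natAbs, ?_, hXb, ?_, hYb, ?_⟩
  · omega
  · omega
  · rcases Int.natAbs_eq X with hX | hX <;> rcases Int.natAbs_eq Y with hY | hY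
    · left; rw [hX, hY] at hmod; exact hmod
    · right; rw [hX, hY] at hmod; exact hmod
    · right
      have h1 := hmod.neg
      rw [hX, hY] at h1
      calc (a * X.natAbs : ℤ) = -((a : ℤ) * -(X.natAbs : ℤ)) := by ring
        _ ≡ -(Y.natAbs : ℤ) [ZMOD p] := h1
    · left
      have h1 := hmod.neg
      rw [hX, hY] at h1
      have h2 : (a * X.natAbs : ℤ) ≡ -(-(Y.natAbs : ℤ)) [ZMOD p] := by
        calc (a * X.natAbs : ℤ) = -((a : ℤ) * -(X.natAbs : ℤ)) := by ring
          _ ≡ -(-(Y.natAbs : ℤ)) [ZMOD p] := h1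
      simpa using h2
end

section
/- Let p be a prime, let a be a natural number not divisible by p, and let α be a natural number with 1 ≤ α ≤ p-1. Then there exist natural numbers x and y with 1 ≤ x ≤ α and 1 ≤ y ≤ ⌊p/α⌋ such that a·x ≡ y (mod p) or a·x ≡ -y (mod p). -/
/-- Auxiliary: the ordered case of Vinogradov's lemma. -/
lemma vinogradov_aux (p : ℕ) (hp : p.Prime) (a : ℕ) (ha : ¬ p ∣ a)
    (α : ℕ) (hα1 : 1 ≤ α) (hα2 : α ≤ p - 1)
    (x1 x2 : ℕ) (hx12 : x2 < x1) (hx1 : x1 ≤ α)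
    (hbucket : (a * x1 % p) / (p / α + 1) = (a * x2 % p) / (p / α + 1)) :
    ∃ x y : ℕ, 1 ≤ x ∧ x ≤ α ∧ 1 ≤ y ∧ y ≤ p / α ∧
      ((a * x : ℤ) ≡ (y : ℤ) [ZMOD p] ∨ (a * x : ℤ) ≡ -(y : ℤ) [ZMOD p]) := by
  have hp2 : 2 ≤ p := hp.two_le
  set q := p / α + 1 with hqdef
  set r1 := a * x1 % p with hr1
  set r2 := a * x2 % p with hr2
  -- difference of residues is < q
  have hq0 : 0 < q := Nat.succ_pos _
  have hd1 : r1 % q + q * (r1 / q) = r1 := Nat.mod_add_div _ _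
  have hd2 : r2 % q + q * (r2 / q) = r2 := Nat.mod_add_div _ _
  have hm1 : r1 % q < q := Nat.mod_lt _ hq0
  have hm2 : r2 % q < q := Nat.mod_lt _ hq0
  rw [hbucket] at hd1
  have hclose : r1 < r2 + q ∧ r2 < r1 + q := by
    constructor <;> omega
  -- congruence facts over ℤ
  have hc1 : (↑(a * x1) : ℤ) ≡ (r1 : ℤ) [ZMOD p] := by
    show (↑(a * x1) : ℤ) % p = (r1 : ℤ) % p
    rw [hr1]
    push_cast
    rw [Int.emod_emod_of_dvd _ dvd_rfl]
  have hc2 : (↑(a * x2) : ℤ) ≡ (r2 : ℤ) [ZMOD p] := by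
    show (↑(a * x2) : ℤ) % p = (r2 : ℤ) % p
    rw [hr2]
    push_cast
    rw [Int.emod_emod_of_dvd _ dvd_rfl]
  set x := x1 - x2 with hxdef
  have hxcast : (x : ℤ) = (x1 : ℤ) - x2 := by
    have : x2 ≤ x1 := hx12.le
    push_cast [hxdef, this]; ring
  have hmain : (a * x : ℤ) ≡ (r1 : ℤ) - (r2 : ℤ) [ZMOD p] := by
    have := hc1.sub hc2
    have heq : (a * x : ℤ) = (↑(a * x1) : ℤ) - (↑(a * x2) : ℤ) := by
      push_cast [hxcast]; ring
    rw [heq]; exact this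
  -- d ≠ 0
  have hxpos : 1 ≤ x := by omega
  have hxα : x ≤ α := by omega
  have hxp : x < p := by omega
  have hdne : r1 ≠ r2 := by
    intro h
    have h0 : (a * x : ℤ) ≡ 0 [ZMOD p] := by
      rw [h] at hmain; simpa using hmain
    have hdvd : (p : ℤ) ∣ (a * x : ℤ) := (Int.modEq_zero_iff_dvd).mp h0
    have : p ∣ a * x := by exact_mod_cast hdvd
    rcases (hp.dvd_mul.mp this) with h | h
    · exact ha h
    · have := Nat.le_of_dvd (by omega) h
      omega
  rcases Nat.lt_or_ge r2 r1 with hlt | hge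
  · refine ⟨x, r1 - r2, hxpos, hxα, by omega, by omega, Or.inl ?_⟩
    have : ((r1 - r2 : ℕ) : ℤ) = (r1 : ℤ) - r2 := by
      push_cast [hlt.le]; ring
    rw [this]; exact hmain
  · have hlt : r1 < r2 := by omega
    refine ⟨x, r2 - r1, hxpos, hxα, by omega, by omega, Or.inr ?_⟩
    have : -((r2 - r1 : ℕ) : ℤ) = (r1 : ℤ) - r2 := by
      push_cast [hlt.le]; ring
    rw [this]; exact hmain

/-- Vinogradov's Lemma: for a prime `p`, `a` not divisible by `p`, and
`1 ≤ α ≤ p - 1`, there exist `x, y` with `1 ≤ x ≤ α` and `1 ≤ y ≤ ⌊p/α⌋`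
such that `a·x ≡ ±y (mod p)`. -/
theorem vinogradov_lemma (p : ℕ) (hp : p.Prime) (a : ℕ) (ha : ¬ p ∣ a)
    (α : ℕ) (hα1 : 1 ≤ α) (hα2 : α ≤ p - 1) :
    ∃ x y : ℕ, 1 ≤ x ∧ x ≤ α ∧ 1 ≤ y ∧ y ≤ p / α ∧
      ((a * x : ℤ) ≡ (y : ℤ) [ZMOD p] ∨ (a * x : ℤ) ≡ -(y : ℤ) [ZMOD p]) := by
  have hp2 : 2 ≤ p := hp.two_le
  set q := p / α + 1 with hqdef
  have hαq : p < α * q := by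
    have h1 : α * (p / α) + p % α = p := Nat.div_add_mod p α
    have h2 : p % α < α := Nat.mod_lt _ (by omega)
    have : α * q = α * (p / α) + α := by ring
    omega
  have hf : ∀ x : Fin (α + 1), (a * x % p) / q < α := by
    intro x
    have h1 : a * x % p < p := Nat.mod_lt _ (by omega)
    have hαq' : p < q * α := by rw [Nat.mul_comm]; exact hαq
    exact Nat.div_lt_of_lt_mul (by omega)
  obtain ⟨x1, x2, hne, heq⟩ := Fintype.exists_ne_map_eq_of_card_lt
    (fun x : Fin (α + 1) => (⟨(a * x % p) / q, hf x⟩ : Fin α)) (by simp)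
  have heq' : (a * x1 % p) / q = (a * x2 % p) / q := by
    simpa using congrArg Fin.val heq
  have hne' : (x1 : ℕ) ≠ (x2 : ℕ) := fun h => hne (Fin.ext h)
  rcases Nat.lt_or_ge (x1 : ℕ) (x2 : ℕ) with h | h
  · exact vinogradov_aux p hp a ha α hα1 hα2 x2 x1 h (Nat.lt_succ_iff.mp x2.isLt) heq'.symm
  · exact vinogradov_aux p hp a ha α hα1 hα2 x1 x2 (by omega) (Nat.lt_succ_iff.mp x1.isLt) heq'
end

section
/- Let p be a prime and let α be a positive natural number with 2α² < p. Then the number of distinct residues a ∈ 𝔽_p \ {0} for which there exist integers x, y with 1 ≤ x, y ≤ α such that a·x ≡ y (mod p) or a·x ≡ -y (mod p) equals twice the number of ordered pairs (u,v) of natural numbers with 1 ≤ u, v ≤ α and gcd(u,v) = 1. -/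
/-- Refinement for short segments: if `2α² < p`, the number of nonzero residues
`a` mod `p` with `a·x ≡ ±y (mod p)` for some `1 ≤ x, y ≤ α` equals twice the
number of ordered coprime pairs `(u, v)` with `1 ≤ u, v ≤ α`. -/
theorem short_segment_count (p : ℕ) [Fact p.Prime] (α : ℕ) (hα : 0 < α)
    (h2α : 2 * α ^ 2 < p) :
    Set.ncard {a : ZMod p | a ≠ 0 ∧ ∃ x y : ℕ, 1 ≤ x ∧ x ≤ α ∧ 1 ≤ y ∧ y ≤ α ∧
        (a * (x : ZMod p) = (y : ZMod p) ∨ a * (x : ZMod p) = -(y : ZMod p))} =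
      2 * ((Finset.Icc 1 α ×ˢ Finset.Icc 1 α).filter
        (fun uv => Nat.gcd uv.1 uv.2 = 1)).card := by
  classical
  have hp : p.Prime := Fact.out
  have hαp : α < p := lt_of_le_of_lt (by nlinarith) h2α
  have hcast : ∀ {m : ℕ}, 1 ≤ m → m ≤ α → (m : ZMod p) ≠ 0 := by
    intro m h1 h2 h0
    rw [ZMod.natCast_eq_zero_iff] at h0
    have := Nat.le_of_dvd (by omega) h0
    omega
  set T := (Finset.Icc 1 α ×ˢ Finset.Icc 1 α).filter
      (fun uv => Nat.gcd uv.1 uv.2 = 1) with hTdef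
  have hmemT : ∀ uv : ℕ × ℕ, uv ∈ T ↔
      (1 ≤ uv.1 ∧ uv.1 ≤ α ∧ 1 ≤ uv.2 ∧ uv.2 ≤ α ∧ Nat.gcd uv.1 uv.2 = 1) := by
    intro uv
    simp [hTdef, Finset.mem_filter, Finset.mem_product, Finset.mem_Icc, and_assoc]
  set f : ℕ × ℕ → ZMod p := fun uv => (uv.2 : ZMod p) * (uv.1 : ZMod p)⁻¹ with hfdef
  -- key injectivity at the natural-number level
  have hkey : ∀ uv ∈ T, ∀ uv' ∈ T,
      ((uv.2 * uv'.1 : ℕ) : ZMod p) = ((uv'.2 * uv.1 : ℕ) : ZMod p) → uv = uv' := by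
    intro uv h uv' h' heq
    rw [hmemT] at h h'
    obtain ⟨h1, h2, h3, h4, h5⟩ := h
    obtain ⟨h1', h2', h3', h4', h5'⟩ := h'
    rw [ZMod.natCast_eq_natCast_iff] at heq
    have hb1 : uv.2 * uv'.1 < p := lt_of_le_of_lt (by nlinarith) h2α
    have hb2 : uv'.2 * uv.1 < p := lt_of_le_of_lt (by nlinarith) h2α
    have heqn : uv.2 * uv'.1 = uv'.2 * uv.1 := by
      have := heq
      unfold Nat.ModEq at this
      rwa [Nat.mod_eq_of_lt hb1, Nat.mod_eq_of_lt hb2] at this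
    have hcop : Nat.Coprime uv.1 uv.2 := h5
    have hcop' : Nat.Coprime uv'.1 uv'.2 := h5'
    have hd1 : uv.1 ∣ uv'.1 := by
      have : uv.1 ∣ uv.2 * uv'.1 := heqn ▸ Dvd.intro_left _ rfl
      exact hcop.dvd_of_dvd_mul_left this
    have hd2 : uv'.1 ∣ uv.1 := by
      have : uv'.1 ∣ uv'.2 * uv.1 := heqn ▸ Dvd.intro_left _ rfl
      exact hcop'.dvd_of_dvd_mul_left this
    have hu : uv.1 = uv'.1 := Nat.dvd_antisymm hd1 hd2
    have hv : uv.2 = uv'.2 := by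
      have : uv.2 * uv.1 = uv'.2 * uv.1 := by rw [← hu] at heqn; omega
      exact Nat.eq_of_mul_eq_mul_right (by omega) this
    exact Prod.ext hu hv
  -- cross multiplication
  have hcross : ∀ uv ∈ T, ∀ uv' ∈ T, f uv = f uv' →
      ((uv.2 * uv'.1 : ℕ) : ZMod p) = ((uv'.2 * uv.1 : ℕ) : ZMod p) := by
    intro uv h uv' h' heq
    rw [hmemT] at h h'
    have hu : (uv.1 : ZMod p) ≠ 0 := hcast h.1 h.2.1
    have hu' : (uv'.1 : ZMod p) ≠ 0 := hcast h'.1 h'.2.1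
    simp only [hfdef] at heq
    push_cast
    field_simp at heq
    linear_combination heq
  have hinj1 : Set.InjOn f ↑T := by
    intro uv h uv' h' heq
    exact hkey uv (by simpa using h) uv' (by simpa using h') (hcross uv (by simpa using h) uv' (by simpa using h') heq)
  have hinj2 : Set.InjOn (fun uv => -f uv) ↑T := by
    intro uv h uv' h' heq
    have : f uv = f uv' := by
      have := heq; simp only [neg_inj] at this; exact this
    exact hkey uv (by simpa using h) uv' (by simpa using h') (hcross uv (by simpa using h) uv' (by simpa using h') this)
  have hdisj : Disjoint (T.image f) (T.image (fun uv => -f uv)) := by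
    rw [Finset.disjoint_left]
    rintro a ha hb
    obtain ⟨uv, hmem, rfl⟩ := Finset.mem_image.mp ha
    obtain ⟨uv', hmem', heq⟩ := Finset.mem_image.mp hb
    rw [hmemT] at hmem hmem'
    have hu : (uv.1 : ZMod p) ≠ 0 := hcast hmem.1 hmem.2.1
    have hu' : (uv'.1 : ZMod p) ≠ 0 := hcast hmem'.1 hmem'.2.1
    simp only [hfdef] at heq
    field_simp at heq
    -- heq relates things; we derive p ∣ uv.2 * uv'.1 + uv'.2 * uv.1
    have hz : ((uv.2 * uv'.1 + uv'.2 * uv.1 : ℕ) : ZMod p) = 0 := by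
      push_cast
      linear_combination -heq
    rw [ZMod.natCast_eq_zero_iff] at hz
    have hpos : 0 < uv.2 * uv'.1 + uv'.2 * uv.1 := by
      have := hmem.1; have := hmem.2.1; have := hmem.2.2.1
      have := hmem'.1
      positivity
    have hle : uv.2 * uv'.1 + uv'.2 * uv.1 ≤ 2 * α ^ 2 := by nlinarith [hmem.2.1, hmem.2.2.2.1, hmem'.2.1, hmem'.2.2.2.1]
    have := Nat.le_of_dvd hpos hz
    omega
  -- the set equals the coercion of the union
  have hset : {a : ZMod p | a ≠ 0 ∧ ∃ x y : ℕ, 1 ≤ x ∧ x ≤ α ∧ 1 ≤ y ∧ y ≤ α ∧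
      (a * (x : ZMod p) = (y : ZMod p) ∨ a * (x : ZMod p) = -(y : ZMod p))} =
      ↑(T.image f ∪ T.image (fun uv => -f uv)) := by
    ext a
    simp only [Set.mem_setOf_eq, Finset.coe_union, Set.mem_union, Finset.coe_image,
      Set.mem_image, Finset.mem_coe]
    constructor
    · rintro ⟨ha, x, y, hx1, hxα, hy1, hyα, hxy⟩
      set d := Nat.gcd x y with hd
      have hdpos : 0 < d := Nat.gcd_pos_of_pos_left _ (by omega)
      set u := x / d with hu
      set v := y / d with hv
      have hux : d * u = x := Nat.mul_div_cancel' (Nat.gcd_dvd_left x y)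
      have hvy : d * v = y := Nat.mul_div_cancel' (Nat.gcd_dvd_right x y)
      have hu1 : 1 ≤ u := Nat.pos_of_ne_zero (by rintro h; rw [h, Nat.mul_zero] at hux; omega)
      have hv1 : 1 ≤ v := Nat.pos_of_ne_zero (by rintro h; rw [h, Nat.mul_zero] at hvy; omega)
      have huα : u ≤ α := le_trans (Nat.div_le_self x d) hxα
      have hvα : v ≤ α := le_trans (Nat.div_le_self y d) hyα
      have hcop : Nat.gcd u v = 1 := Nat.coprime_div_gcd_div_gcd hdpos
      have hTm : (u, v) ∈ T := (hmemT (u, v)).mpr ⟨hu1, huα, hv1, hvα, hcop⟩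
      have hxne : (x : ZMod p) ≠ 0 := hcast hx1 hxα
      have hune : (u : ZMod p) ≠ 0 := hcast hu1 huα
      have hyu : (y : ZMod p) * (u : ZMod p) = (v : ZMod p) * (x : ZMod p) := by
        have h' : y * u = v * x := by rw [← hux, ← hvy]; ring
        exact_mod_cast congrArg (fun n : ℕ => (n : ZMod p)) h'
      have hfx : f (u, v) * (x : ZMod p) = (y : ZMod p) := by
        have hfval : f (u, v) = (y : ZMod p) * (x : ZMod p)⁻¹ := by
          simp only [hfdef]
          field_simp
          linear_combination -hyu
        rw [hfval, mul_assoc, inv_mul_cancel₀ hxne, mul_one]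
      rcases hxy with h | h
      · left
        refine ⟨(u, v), hTm, ?_⟩
        apply mul_right_cancel₀ hxne
        rw [hfx, h]
      · right
        refine ⟨(u, v), hTm, ?_⟩
        show -f (u, v) = a
        apply mul_right_cancel₀ hxne
        rw [neg_mul, hfx, h]
    · rintro (⟨uv, hmem, rfl⟩ | ⟨uv, hmem, rfl⟩) <;>
        rw [hmemT] at hmem <;>
        obtain ⟨h1, h2, h3, h4, _⟩ := hmem
      · have hune : (uv.1 : ZMod p) ≠ 0 := hcast h1 h2
        have hvne : (uv.2 : ZMod p) ≠ 0 := hcast h3 h4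
        refine ⟨by simp [hfdef, hvne, hune], uv.1, uv.2, h1, h2, h3, h4, Or.inl ?_⟩
        simp only [hfdef]
        field_simp
      · have hune : (uv.1 : ZMod p) ≠ 0 := hcast h1 h2
        have hvne : (uv.2 : ZMod p) ≠ 0 := hcast h3 h4
        refine ⟨by simp [hfdef, hvne, hune], uv.1, uv.2, h1, h2, h3, h4, Or.inr ?_⟩
        simp only [hfdef]
        field_simp
  rw [hset, Set.ncard_coe_finset, Finset.card_union_of_disjoint hdisj,
    Finset.card_image_of_injOn hinj1, Finset.card_image_of_injOn hinj2]
  ring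
end

section
/- Let p be a prime, let S ⊆ 𝔽_p × 𝔽_p be a set of n points with n < p, and let α ∈ 𝔽_p \ {0}. Define Δ_α = {α·a + b : (a,b) ∈ S} and Q = {(a_i − a_j)/(b_i − b_j) : (a_i,b_i), (a_j,b_j) ∈ S, b_i ≠ b_j}. If S is not collinear, i.e., there are no elements m, β ∈ 𝔽_p such that m·a + β = b for all (a,b) ∈ S, then |Q| ≥ |S| − |Δ_α| + 1. -/
/-!
Write `a - y b` for the projection of `(a, b)` along the direction `y`. For `y ∉ Q` the
projection is injective on `S`, so `f_y = ∏_{P ∈ S} (X - (a_P - y b_P))` divides `X^q - X`.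
Dividing `X^q - X` by the bivariate `f(Y, X)` keeps the total degree of the remainder
`r(Y, X)` at most `q`; since `r(y, X) = 0` for the `q - |Q|` values `y ∉ Q`, its coefficient of
`X^j`, of degree at most `q - j`, vanishes for `j > |Q|`. Hence for every `y` there is `h` of
degree at most `|Q|` with `f_y ∣ X^q - X - h`.

Along the direction `y = -α⁻¹` the points of `S` project onto `α⁻¹ Δ`; let `k_δ` be the
number of points projecting to `δ`. By Frobenius `X^q - X - h = (X - δ)^q - (u - δ)` with
`u = X + h`, so `(X - δ)^(k_δ)` divides `u - δ`, and `u'` is divisible by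
`∏_δ (X - δ)^(k_δ - 1)`, of degree `|S| - |Δ|`. If `|Q| ≤ |S| - |Δ|`, then `deg u < p`; as
`u - δ` vanishes at two different `δ`, `u` is not constant, so `u' ≠ 0` and
`|S| - |Δ| < deg u ≤ max 1 |Q|`, a contradiction.
-/

open Polynomial Finset

namespace Polynomial

section TotalDegree

variable {R : Type*} [CommRing R]

def TotalDegreeLE (W : ℕ) (F : R[X][X]) : Prop :=
  ∀ j, F.coeff j ≠ 0 → (F.coeff j).natDegree + j ≤ W

theorem totalDegreeLE_C_mul_X_pow {c : R[X]} {w : ℕ} (hc : c.natDegree ≤ w) (k : ℕ) :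
    TotalDegreeLE (w + k) (C c * X ^ k) := by
  intro j hj
  rw [coeff_C_mul_X_pow] at hj ⊢
  split_ifs at hj ⊢ with h
  · omega
  · exact absurd rfl hj

theorem totalDegreeLE_X_pow (k : ℕ) : TotalDegreeLE k (X ^ k : R[X][X]) := by
  simpa using totalDegreeLE_C_mul_X_pow (R := R) (c := 1) (w := 0) (by simp) k

namespace TotalDegreeLE

variable {W W₁ W₂ : ℕ} {F G : R[X][X]}

theorem mono (hF : TotalDegreeLE W₁ F) (h : W₁ ≤ W₂) : TotalDegreeLE W₂ F :=
  fun j hj => (hF j hj).trans h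

theorem sub (hF : TotalDegreeLE W F) (hG : TotalDegreeLE W G) : TotalDegreeLE W (F - G) := by
  intro j hj
  rw [coeff_sub] at hj ⊢
  by_cases hFj : F.coeff j = 0
  · simpa [hFj] using hG j (by simpa [hFj] using hj)
  by_cases hGj : G.coeff j = 0
  · simpa [hGj] using hF j hFj
  have := natDegree_sub_le (F.coeff j) (G.coeff j)
  have := hF j hFj
  have := hG j hGj
  omega

theorem mul (hF : TotalDegreeLE W₁ F) (hG : TotalDegreeLE W₂ G) :
    TotalDegreeLE (W₁ + W₂) (F * G) := by
  intro j hj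
  rw [coeff_mul] at hj ⊢
  have hterm : ∀ x ∈ antidiagonal j, F.coeff x.1 * G.coeff x.2 ≠ 0 →
      (F.coeff x.1 * G.coeff x.2).natDegree + j ≤ W₁ + W₂ := by
    rintro ⟨a, b⟩ hab hne
    rw [HasAntidiagonal.mem_antidiagonal] at hab
    dsimp only at hab hne ⊢
    have := hF a (left_ne_zero_of_mul hne)
    have := hG b (right_ne_zero_of_mul hne)
    have := natDegree_mul_le (p := F.coeff a) (q := G.coeff b)
    omega
  obtain ⟨x, hx, hne⟩ := exists_ne_zero_of_sum_ne_zero hj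
  have hj := hterm x hx hne
  have : (∑ x ∈ antidiagonal j, F.coeff x.1 * G.coeff x.2).natDegree ≤ W₁ + W₂ - j :=
    natDegree_sum_le_of_forall_le _ _ fun x hx => by
      by_cases hne : F.coeff x.1 * G.coeff x.2 = 0
      · simp [hne]
      · have := hterm x hx hne
        omega
  omega

theorem prod {ι : Type*} {s : Finset ι} {w : ι → ℕ} {F : ι → R[X][X]}
    (hF : ∀ i ∈ s, TotalDegreeLE (w i) (F i)) :
    TotalDegreeLE (∑ i ∈ s, w i) (∏ i ∈ s, F i) := by
  induction s using Finset.cons_induction with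
  | empty => simpa using totalDegreeLE_X_pow (R := R) 0
  | cons a s ha ih =>
    rw [prod_cons, sum_cons]
    exact (hF a (mem_cons_self a s)).mul (ih fun i hi => hF i (mem_cons_of_mem hi))

theorem exists_eq_mul_add [Nontrivial R] {f d : R[X][X]} (hf : f.Monic)
    (hwf : TotalDegreeLE f.natDegree f) (hd : TotalDegreeLE W d) :
    ∃ g r, d = f * g + r ∧ r.degree < f.degree ∧ TotalDegreeLE W r := by
  induction hD : d.degree using WellFoundedLT.induction generalizing d with
  | _ D ih => ?_
  by_cases hlt : d.degree < f.degree
  · exact ⟨0, d, by ring, hlt, hd⟩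
  have hd0 : d ≠ 0 := by
    rintro rfl
    exact hlt (bot_lt_iff_ne_bot.mpr (degree_eq_bot.not.mpr hf.ne_zero))
  set u := C d.leadingCoeff * X ^ (d.natDegree - f.natDegree)
  have hle : f.natDegree ≤ d.natDegree := natDegree_le_natDegree (not_lt.mp hlt)
  have hlc := hd d.natDegree (by simpa using hd0)
  rw [coeff_natDegree] at hlc
  have hwu : TotalDegreeLE W (d - f * u) :=
    hd.sub ((hwf.mul (totalDegreeLE_C_mul_X_pow le_rfl _)).mono (by omega))
  obtain ⟨g, r, h, hr, hwr⟩ := ih _ (hD ▸ div_wf_lemma ⟨not_lt.mp hlt, hd0⟩ hf) hwu rfl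
  exact ⟨u + g, r, by linear_combination h, hr, hwr⟩

theorem coeff_eq_zero [IsDomain R] {j : ℕ} {r : R[X][X]}
    (hr : TotalDegreeLE W r) {Z : Finset R} (hZ : ∀ z ∈ Z, r.map (evalRingHom z) = 0)
    (hj : W < j + #Z) : r.coeff j = 0 := by
  by_contra hne
  have := hr j hne
  refine hne (eq_zero_of_natDegree_lt_card_of_eval_eq_zero' _ Z (fun z hz => ?_) (by omega))
  simpa using congrArg (coeff · j) (hZ z hz)

end TotalDegreeLE

end TotalDegree

section OneVariable

variable {K : Type*} [Field K]

theorem natDegree_eq_zero_of_derivative_eq_zero_of_lt_ringChar {u : K[X]}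
    (hu' : derivative u = 0) (hu : u.natDegree < ringChar K) : u.natDegree = 0 := by
  have hp : ringChar K ≠ 0 := by omega
  rw [← expand_contract (ringChar K) hu' hp, natDegree_expand] at hu ⊢
  rw [Nat.mul_eq_zero, or_iff_left hp]
  by_contra h
  have := Nat.le_mul_of_pos_left (ringChar K) (Nat.pos_of_ne_zero h)
  omega

theorem sum_lt_natDegree_of_pow_dvd_sub_C {u : K[X]} {Δ : Finset K} {k : K → ℕ}
    (hΔ : 1 < #Δ) (hk : ∀ δ ∈ Δ, (X - C δ) ^ (k δ + 1) ∣ u - C δ)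
    (hu : u.natDegree < ringChar K) : ∑ δ ∈ Δ, k δ < u.natDegree := by
  have hdvd : ∏ δ ∈ Δ, (X - C δ) ^ k δ ∣ derivative u := by
    refine prod_dvd_of_coprime
      (fun a _ b _ hab => (pairwise_coprime_X_sub_C Function.injective_id hab).pow) fun δ hδ => ?_
    simpa using pow_sub_one_dvd_derivative_of_pow_dvd (hk δ hδ)
  have hu' : derivative u ≠ 0 := by
    intro h0
    have hconst := eq_C_of_natDegree_eq_zero
      (natDegree_eq_zero_of_derivative_eq_zero_of_lt_ringChar h0 hu)
    have hroot : ∀ δ ∈ Δ, δ = u.coeff 0 := fun δ hδ => by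
      have := dvd_iff_isRoot.mp ((dvd_pow_self _ (k δ).succ_ne_zero).trans (hk δ hδ))
      rw [hconst, IsRoot, eval_sub, eval_C, eval_C, sub_eq_zero] at this
      exact this.symm
    obtain ⟨a, ha, b, hb, hab⟩ := one_lt_card.mp hΔ
    exact hab ((hroot a ha).trans (hroot b hb).symm)
  calc ∑ δ ∈ Δ, k δ = (∏ δ ∈ Δ, (X - C δ) ^ k δ).natDegree := by
        rw [natDegree_prod _ _ fun δ _ => pow_ne_zero _ (X_sub_C_ne_zero δ)]
        simp
    _ ≤ (derivative u).natDegree := natDegree_le_of_dvd hdvd hu'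
    _ < u.natDegree := natDegree_derivative_lt fun h => hu' <| by
        rw [eq_C_of_natDegree_eq_zero h, derivative_C]

end OneVariable

section FiniteField

variable {K : Type*} [Field K] [Fintype K]

theorem X_sub_C_pow_card (δ : K) : (X - C δ) ^ Fintype.card K = X ^ Fintype.card K - C δ := by
  simpa [← C_pow, FiniteField.pow_card] using
    map_sub (FiniteField.frobeniusAlgHom K K[X]) X (C δ)

theorem prod_X_sub_C_dvd_X_pow_card_sub_X (s : Finset K) :
    ∏ a ∈ s, (X - C a) ∣ X ^ Fintype.card K - X := by
  refine prod_dvd_of_coprime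
    (fun a _ b _ hab => pairwise_coprime_X_sub_C Function.injective_id hab) fun a _ => ?_
  simp [dvd_iff_isRoot, FiniteField.pow_card]

end FiniteField

end Polynomial

theorem FiniteField.ringChar_le_card (K : Type*) [Field K] [Fintype K] :
    ringChar K ≤ Fintype.card K :=
  Nat.le_of_dvd Fintype.card_pos (ringChar.dvd (by simp))

namespace PlaneDirections

variable {K : Type*} [Field K]

/-- `∏_{(a, b) ∈ S} (X - (a - Y b))`, where `Y` is the variable of the coefficient ring. -/
noncomputable def projectionPoly (S : Finset (K × K)) : K[X][X] :=
  ∏ P ∈ S, (X - C (C P.1 - X * C P.2))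

theorem monic_projectionPoly (S : Finset (K × K)) : (projectionPoly S).Monic :=
  monic_prod_of_monic _ _ fun _ _ => monic_X_sub_C _

theorem natDegree_projectionPoly (S : Finset (K × K)) : (projectionPoly S).natDegree = #S := by
  rw [projectionPoly, natDegree_prod_of_monic _ _ fun _ _ => monic_X_sub_C _]
  simp only [natDegree_X_sub_C, sum_const, smul_eq_mul, mul_one]

theorem totalDegreeLE_projectionPoly (S : Finset (K × K)) :
    TotalDegreeLE (projectionPoly S).natDegree (projectionPoly S) := by
  rw [natDegree_projectionPoly, card_eq_sum_ones]
  refine TotalDegreeLE.prod fun P _ => ?_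
  have hX := totalDegreeLE_X_pow (R := K) 1
  have hc := totalDegreeLE_C_mul_X_pow (c := C P.1 - X * C P.2) (w := 1) (by compute_degree) 0
  simpa using hX.sub hc

theorem map_evalRingHom_projectionPoly (S : Finset (K × K)) (y : K) :
    (projectionPoly S).map (evalRingHom y) = ∏ P ∈ S, (X - C (P.1 - y * P.2)) := by
  rw [projectionPoly, Polynomial.map_prod]
  refine prod_congr rfl fun P _ => ?_
  simp only [Polynomial.map_sub, map_X, map_C, coe_evalRingHom, eval_sub, eval_mul, eval_C, eval_X]

def ContainsRatios (S : Finset (K × K)) (Q : Finset K) : Prop :=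
  ∀ P ∈ S, ∀ P' ∈ S, P.2 ≠ P'.2 → (P.1 - P'.1) / (P.2 - P'.2) ∈ Q

section Directions

variable {S : Finset (K × K)} {Q : Finset K}

theorem injOn_fst_sub_mul_snd (hQ : ContainsRatios S Q) {z : K} (hz : z ∉ Q) :
    Set.InjOn (fun P : K × K => P.1 - z * P.2) S := by
  intro P hP P' hP' h
  dsimp only at h
  by_cases h2 : P.2 = P'.2
  · exact Prod.ext (by rw [h2] at h; linear_combination h) h2
  have hdir : (P.1 - P'.1) / (P.2 - P'.2) = z := by
    rw [div_eq_iff (sub_ne_zero.mpr h2)]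
    linear_combination h
  exact absurd (hdir ▸ hQ P hP P' hP' h2) hz

theorem prod_dvd_X_pow_card_sub_X [Fintype K] (hQ : ContainsRatios S Q) {z : K} (hz : z ∉ Q) :
    ∏ P ∈ S, (X - C (P.1 - z * P.2)) ∣ X ^ Fintype.card K - X := by
  classical
  rw [← prod_image (f := fun a => X - C a) (injOn_fst_sub_mul_snd hQ hz)]
  exact prod_X_sub_C_dvd_X_pow_card_sub_X _

theorem exists_natDegree_le_card_and_prod_dvd [Fintype K] (hQ : ContainsRatios S Q) (y : K) :
    ∃ h : K[X], h.natDegree ≤ #Q ∧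
      ∏ P ∈ S, (X - C (P.1 - y * P.2)) ∣ X ^ Fintype.card K - X - h := by
  classical
  set q := Fintype.card K
  have hq : 1 ≤ q := Fintype.card_pos
  have hd : TotalDegreeLE q (X ^ q - X : K[X][X]) := by
    simpa using (totalDegreeLE_X_pow q).sub ((totalDegreeLE_X_pow 1).mono hq)
  obtain ⟨g, r, hdiv, hr, hwr⟩ :=
    TotalDegreeLE.exists_eq_mul_add (monic_projectionPoly S) (totalDegreeLE_projectionPoly S) hd
  have hspec : ∀ z, X ^ q - X =
      (∏ P ∈ S, (X - C (P.1 - z * P.2))) * g.map (evalRingHom z) + r.map (evalRingHom z) :=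
    fun z => by
      simpa only [Polynomial.map_add, Polynomial.map_mul, map_evalRingHom_projectionPoly,
        Polynomial.map_sub, Polynomial.map_pow, map_X] using congrArg (map (evalRingHom z)) hdiv
  have hvanish : ∀ z ∈ univ \ Q, r.map (evalRingHom z) = 0 := by
    intro z hz
    have hdvd := prod_dvd_X_pow_card_sub_X hQ (mem_sdiff.mp hz).2
    rw [hspec z, dvd_add_right (dvd_mul_right _ _)] at hdvd
    refine eq_zero_of_dvd_of_degree_lt hdvd ?_
    rw [← map_evalRingHom_projectionPoly, (monic_projectionPoly S).degree_map]
    exact degree_map_le.trans_lt hr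
  refine ⟨r.map (evalRingHom y), natDegree_le_iff_coeff_eq_zero.mpr fun j hj => ?_,
    g.map (evalRingHom y), by rw [hspec y]; ring⟩
  have hQq : #Q ≤ q := card_le_univ Q
  rw [coeff_map, hwr.coeff_eq_zero hvanish (by rw [card_univ_sdiff]; omega), map_zero]

theorem card_lt_card_image_add_card [Fintype K] [DecidableEq K] (hQ : ContainsRatios S Q) (y : K)
    (hΔ : 1 < #(S.image fun P => P.1 - y * P.2))
    (hΔS : #(S.image fun P => P.1 - y * P.2) < #S) (hS : #S < ringChar K) :
    #S < #(S.image fun P => P.1 - y * P.2) + #Q := by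
  by_contra! hQS
  set c : K × K → K := fun P => P.1 - y * P.2
  set q := Fintype.card K
  set fiber : K → ℕ := fun δ => #{P ∈ S | c P = δ}
  obtain ⟨h, hh, hdvd⟩ := exists_natDegree_le_card_and_prod_dvd hQ y
  rw [prod_comp (fun δ => X - C δ) c] at hdvd
  have hfiber : ∀ δ ∈ S.image c, 1 ≤ fiber δ := fun δ hδ => by
    obtain ⟨P, hP, rfl⟩ := mem_image.mp hδ
    exact card_pos.mpr ⟨P, mem_filter.mpr ⟨hP, rfl⟩⟩
  have hk : ∀ δ ∈ S.image c, (X - C δ) ^ (fiber δ - 1 + 1) ∣ X + h - C δ := by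
    intro δ hδ
    rw [Nat.sub_add_cancel (hfiber δ hδ)]
    have hle : fiber δ ≤ q :=
      (card_filter_le _ _).trans (hS.le.trans (FiniteField.ringChar_le_card K))
    have hfrob : X + h - C δ = (X - C δ) ^ q - (X ^ q - X - h) := by
      rw [X_sub_C_pow_card]
      ring
    rw [hfrob]
    exact dvd_sub (pow_dvd_pow _ hle)
      ((dvd_prod_of_mem (fun δ => (X - C δ) ^ fiber δ) hδ).trans hdvd)
  have hsum : ∑ δ ∈ S.image c, (fiber δ - 1) = #S - #(S.image c) := by
    rw [sum_tsub_distrib _ hfiber, ← card_eq_sum_card_image, sum_const, smul_eq_mul, mul_one]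
  have hdeg : (X + h).natDegree ≤ max 1 #Q :=
    (natDegree_add_le _ _).trans (max_le_max (natDegree_X_le) hh)
  have := sum_lt_natDegree_of_pow_dvd_sub_C hΔ hk (by omega)
  omega

end Directions

theorem exists_line_of_forall_mul_add_eq {S : Finset (K × K)} {α : K}
    (h : ∀ P ∈ S, ∀ P' ∈ S, α * P.1 + P.2 = α * P'.1 + P'.2) :
    ∃ m β : K, ∀ P ∈ S, m * P.1 + β = P.2 := by
  rcases S.eq_empty_or_nonempty with rfl | ⟨P₀, hP₀⟩
  · exact ⟨0, 0, by simp⟩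
  exact ⟨-α, α * P₀.1 + P₀.2, fun P hP => by linear_combination (h P hP P₀ hP₀).symm⟩

theorem card_image_mul_fst_add_snd [DecidableEq K] (S : Finset (K × K)) {α : K} (hα : α ≠ 0) :
    #(S.image fun P => α * P.1 + P.2) = #(S.image fun P => P.1 - (-α⁻¹) * P.2) := by
  rw [eq_comm, ← card_image_of_injective _ (mul_right_injective₀ hα), image_image]
  refine congrArg card (image_congr fun P _ => ?_)
  change α * (P.1 - -α⁻¹ * P.2) = α * P.1 + P.2
  rw [mul_sub, ← mul_assoc, mul_neg, mul_inv_cancel₀ hα]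
  ring

end PlaneDirections

/-- Sumsets versus directions: for a non-collinear set `S ⊆ 𝔽_p²` of `n < p`
points and `α ≠ 0`, the ratio set `Q` satisfies `|Q| ≥ |S| − |Δ_α| + 1`, where
`Δ_α = {α·a + b : (a,b) ∈ S}`. -/
theorem sumsets_vs_directions (p : ℕ) [Fact p.Prime]
    (S : Finset (ZMod p × ZMod p)) (n : ℕ) (hn : S.card = n) (hnp : n < p)
    (α : ZMod p) (hα : α ≠ 0)
    (hncol : ¬ ∃ m β : ZMod p, ∀ P ∈ S, m * P.1 + β = P.2) :
    S.card - (S.image (fun P => α * P.1 + P.2)).card + 1 ≤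
      Set.ncard {q : ZMod p | ∃ P ∈ S, ∃ P' ∈ S, P.2 ≠ P'.2 ∧
        q = (P.1 - P'.1) / (P.2 - P'.2)} := by
  classical
  set Q : Set (ZMod p) :=
    {q | ∃ P ∈ S, ∃ P' ∈ S, P.2 ≠ P'.2 ∧ q = (P.1 - P'.1) / (P.2 - P'.2)}
  rw [Set.ncard_eq_toFinset_card Q (Set.toFinite Q)]
  have hQ : PlaneDirections.ContainsRatios S (Set.toFinite Q).toFinset := fun P hP P' hP' h => by
    rw [Set.Finite.mem_toFinset]
    exact ⟨P, hP, P', hP', h, rfl⟩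
  have hΔ := PlaneDirections.card_image_mul_fst_add_snd S hα
  have htwo : 1 < #(S.image fun P => α * P.1 + P.2) := by
    by_contra! h
    exact hncol (PlaneDirections.exists_line_of_forall_mul_add_eq fun P hP P' hP' =>
      card_le_one.mp h _ (mem_image_of_mem _ hP) _ (mem_image_of_mem _ hP'))
  rcases le_or_gt #S #(S.image fun P => α * P.1 + P.2) with hle | hlt
  · obtain ⟨P, hP, P', hP', hne⟩ : ∃ P ∈ S, ∃ P' ∈ S, P.2 ≠ P'.2 := by
      by_contra! h
      exact hncol (PlaneDirections.exists_line_of_forall_mul_add_eq (α := 0) (by simpa using h))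
    have := card_pos.mpr ⟨_, hQ P hP P' hP' hne⟩
    omega
  · have := PlaneDirections.card_lt_card_image_add_card hQ (-α⁻¹) (hΔ ▸ htwo) (hΔ ▸ hlt)
      (by rw [ZMod.ringChar_zmod_n]; omega)
    omega
end
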